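/- Fierz identity: for all s₁, s₂ ∈ ℂ⁴, the rank-one 4×4 complex matrix s₁ (s₂ᵀ C) satisfies s₁ (s₂ᵀ C) = −(1/4)(s̄₁ s₂)·1 − (1/4) Σ_μ (s̄₁ Γ^μ s₂) Γ_μ − (1/8) Σ_{μ,ν} (s̄₁ Γ^{μν} s₂) Γ_{μν}. -/

import Mathlib

open Matrix

noncomputable section

/-- The mostly-minus Minkowski metric η = diag(1,−1,−1,−1,−1) (equal to its own inverse). -/
def eta (μ ν : Fin 5) : ℂ := if μ = ν then (if μ = 0 then 1 else -1) else 0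

/-- Γ_{μν} := (1/2)(Γ_μ Γ_ν − Γ_ν Γ_μ). -/
def comm2 (Γ : Fin 5 → Matrix (Fin 4) (Fin 4) ℂ) (μ ν : Fin 5) : Matrix (Fin 4) (Fin 4) ℂ :=
  (1/2 : ℂ) • (Γ μ * Γ ν - Γ ν * Γ μ)

/-- s̄₁ s₂ := s₁ᵀ C s₂. -/
def bil (Cm : Matrix (Fin 4) (Fin 4) ℂ) (s₁ s₂ : Fin 4 → ℂ) : ℂ := s₁ ⬝ᵥ Cm *ᵥ s₂

/-- s̄₁ M s₂ := s₁ᵀ C M s₂. -/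
def bilM (Cm M : Matrix (Fin 4) (Fin 4) ℂ) (s₁ s₂ : Fin 4 → ℂ) : ℂ := s₁ ⬝ᵥ Cm *ᵥ M *ᵥ s₂

namespace FierzAux

abbrev M4 := Matrix (Fin 4) (Fin 4) ℂ

lemma eta_sq (μ : Fin 5) : eta μ μ * eta μ μ = 1 := by
  rcases eq_or_ne μ 0 with h | h <;> simp [eta, h]

lemma eta_ne (μ : Fin 5) : eta μ μ ≠ 0 := by
  rcases eq_or_ne μ 0 with h | h <;> simp [eta, h]

lemma eta_off {μ ν : Fin 5} (h : μ ≠ ν) : eta μ ν = 0 := by simp [eta, h]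

lemma eta_delta (μ ν : Fin 5) : eta μ μ * eta μ ν = if μ = ν then 1 else 0 := by
  rcases eq_or_ne μ ν with h | h
  · subst h; simp [eta_sq]
  · simp [eta_off h, h]

lemma trace_anticomm {A B : M4} {c : ℂ} (hB : B * B = c • 1) (hc : c ≠ 0)
    (h : A * B = -(B * A)) : trace A = 0 := by
  have h1 : trace (B * B * A) = -(trace (B * B * A)) := by
    calc trace (B * B * A) = trace (B * (B * A)) := by rw [mul_assoc]
    _ = trace ((B * A) * B) := (trace_mul_comm _ _).symm
    _ = trace (B * (A * B)) := by rw [mul_assoc]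
    _ = trace (B * -(B * A)) := by rw [h]
    _ = -(trace (B * B * A)) := by rw [mul_neg, trace_neg, mul_assoc]
  have h2 : trace (B * B * A) = 0 := by
    have h0 : (2:ℂ) * trace (B*B*A) = 0 := by linear_combination h1
    simpa using h0
  have h3 : c * trace A = 0 := by
    rw [← h2, hB, smul_mul_assoc, one_mul, trace_smul, smul_eq_mul]
  exact (mul_eq_zero.mp h3).resolve_left hc

variable {Γ : Fin 5 → Matrix (Fin 4) (Fin 4) ℂ}

section
variable (hC : ∀ μ ν, Γ μ * Γ ν + Γ ν * Γ μ = (2 * eta μ ν) • (1 : M4))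

include hC

lemma hsq (μ : Fin 5) : Γ μ * Γ μ = eta μ μ • (1 : M4) := by
  have h := hC μ μ
  have h2 : (2:ℂ) • (Γ μ * Γ μ) = (2 * eta μ μ) • (1:M4) := by rw [two_smul]; exact h
  calc Γ μ * Γ μ = ((2:ℂ)⁻¹ * 2) • (Γ μ * Γ μ) := by norm_num
    _ = (2:ℂ)⁻¹ • ((2:ℂ) • (Γ μ * Γ μ)) := by rw [smul_smul]
    _ = (2:ℂ)⁻¹ • ((2 * eta μ μ) • (1:M4)) := by rw [h2]
    _ = eta μ μ • 1 := by rw [smul_smul]; congr 1; ring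

lemma hswap {μ ν : Fin 5} (h : μ ≠ ν) : Γ μ * Γ ν = -(Γ ν * Γ μ) := by
  have h2 := hC μ ν
  rw [eta_off h] at h2
  simp at h2
  linear_combination (norm := abel) h2



lemma tr1 (μ : Fin 5) : trace (Γ μ) = 0 := by
  obtain ⟨ν, hν⟩ : ∃ ν : Fin 5, ν ≠ μ := by
    rcases eq_or_ne μ 0 with h | h
    · exact ⟨1, by simp [h]⟩
    · exact ⟨0, fun e => h e.symm⟩
  exact trace_anticomm (hsq hC ν) (eta_ne ν) (hswap hC hν.symm)

lemma tr2 (μ ν : Fin 5) : trace (Γ μ * Γ ν) = 4 * eta μ ν := by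
  have h := congrArg trace (hC μ ν)
  rw [trace_add, trace_mul_comm (Γ ν) (Γ μ), trace_smul, trace_one] at h
  simp only [Fintype.card_fin, smul_eq_mul, Nat.cast_ofNat] at h
  have : (2:ℂ) * trace (Γ μ * Γ ν) = 2 * (4 * eta μ ν) := by
    linear_combination h
  have h2 := mul_left_cancel₀ (two_ne_zero) this
  exact h2

lemma tr3 (μ ν ρ : Fin 5) : trace (Γ μ * Γ ν * Γ ρ) = 0 := by
  rcases eq_or_ne μ ν with h | hμν
  · subst h
    rw [hsq hC μ, smul_mul_assoc, one_mul, trace_smul, tr1 hC, smul_zero]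
  rcases eq_or_ne ν ρ with h | hνρ
  · subst h
    rw [mul_assoc, hsq hC ν, mul_smul_comm, mul_one, trace_smul, tr1 hC, smul_zero]
  rcases eq_or_ne μ ρ with h | hμρ
  · subst h
    rw [trace_mul_comm, ← mul_assoc, hsq hC μ, smul_mul_assoc, one_mul, trace_smul,
      tr1 hC, smul_zero]
  obtain ⟨σ, h1, h2, h3⟩ : ∃ σ : Fin 5, σ ≠ μ ∧ σ ≠ ν ∧ σ ≠ ρ := by
    have : ∀ a b c : Fin 5, ∃ d : Fin 5, d ≠ a ∧ d ≠ b ∧ d ≠ c := by decide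
    exact this μ ν ρ
  refine trace_anticomm (hsq hC σ) (eta_ne σ) ?_
  have s1 : Γ ν * (Γ σ * Γ ρ) = -(Γ σ * (Γ ν * Γ ρ)) := by
    rw [← mul_assoc, hswap hC (Ne.symm h2), neg_mul, mul_assoc]
  have s2 : Γ μ * (Γ σ * (Γ ν * Γ ρ)) = -(Γ σ * (Γ μ * (Γ ν * Γ ρ))) := by
    rw [← mul_assoc, hswap hC (Ne.symm h1), neg_mul, mul_assoc]
  calc Γ μ * Γ ν * Γ ρ * Γ σ = Γ μ * (Γ ν * (Γ ρ * Γ σ)) := by simp only [mul_assoc]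
    _ = Γ μ * (Γ ν * (-(Γ σ * Γ ρ))) := by rw [hswap hC (Ne.symm h3)]
    _ = -(Γ μ * (Γ ν * (Γ σ * Γ ρ))) := by simp only [mul_neg]
    _ = -(Γ μ * (-(Γ σ * (Γ ν * Γ ρ)))) := by rw [s1]
    _ = Γ μ * (Γ σ * (Γ ν * Γ ρ)) := by rw [mul_neg, neg_neg]
    _ = -(Γ σ * (Γ μ * (Γ ν * Γ ρ))) := s2
    _ = -(Γ σ * (Γ μ * Γ ν * Γ ρ)) := by simp only [mul_assoc]

lemma tr4 (μ ν ρ σ : Fin 5) : trace (Γ μ * Γ ν * Γ ρ * Γ σ) =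
    4 * (eta μ ν * eta ρ σ - eta μ ρ * eta ν σ + eta μ σ * eta ν ρ) := by
  have e1 : Γ μ * Γ ν = (2 * eta μ ν) • (1:M4) - Γ ν * Γ μ := by
    rw [← hC μ ν]; abel
  have e2 : Γ μ * Γ ρ = (2 * eta μ ρ) • (1:M4) - Γ ρ * Γ μ := by
    rw [← hC μ ρ]; abel
  have e3 : Γ μ * Γ σ = (2 * eta μ σ) • (1:M4) - Γ σ * Γ μ := by
    rw [← hC μ σ]; abel
  have h1 : trace (Γ μ * Γ ν * Γ ρ * Γ σ)
      = 2 * eta μ ν * (4 * eta ρ σ) - trace (Γ ν * Γ μ * Γ ρ * Γ σ) := by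
    have m1 : Γ μ * Γ ν * Γ ρ * Γ σ
        = (2 * eta μ ν) • (Γ ρ * Γ σ) - Γ ν * Γ μ * Γ ρ * Γ σ := by
      rw [e1]
      simp only [mul_sub, sub_mul, smul_mul_assoc, mul_smul_comm, mul_one, one_mul, mul_assoc]
    rw [m1, trace_sub, trace_smul, smul_eq_mul, tr2 hC]; try ring
  have h2 : trace (Γ ν * Γ μ * Γ ρ * Γ σ)
      = 2 * eta μ ρ * (4 * eta ν σ) - trace (Γ ν * Γ ρ * Γ μ * Γ σ) := by
    have m2 : Γ ν * Γ μ * Γ ρ * Γ σ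
        = (2 * eta μ ρ) • (Γ ν * Γ σ) - Γ ν * Γ ρ * Γ μ * Γ σ := by
      rw [mul_assoc (Γ ν) (Γ μ) (Γ ρ), e2]
      simp only [mul_sub, sub_mul, smul_mul_assoc, mul_smul_comm, mul_one, one_mul, mul_assoc]
    rw [m2, trace_sub, trace_smul, smul_eq_mul, tr2 hC]; try ring
  have h3 : trace (Γ ν * Γ ρ * Γ μ * Γ σ)
      = 2 * eta μ σ * (4 * eta ν ρ) - trace (Γ ν * Γ ρ * Γ σ * Γ μ) := by
    have m3 : Γ ν * Γ ρ * Γ μ * Γ σ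
        = (2 * eta μ σ) • (Γ ν * Γ ρ) - Γ ν * Γ ρ * Γ σ * Γ μ := by
      rw [mul_assoc (Γ ν * Γ ρ) (Γ μ) (Γ σ), e3]
      simp only [mul_sub, sub_mul, smul_mul_assoc, mul_smul_comm, mul_one, one_mul, mul_assoc]
    rw [m3, trace_sub, trace_smul, smul_eq_mul, tr2 hC]; try ring
  have h4 : trace (Γ ν * Γ ρ * Γ σ * Γ μ) = trace (Γ μ * Γ ν * Γ ρ * Γ σ) := by
    rw [trace_mul_comm, ← mul_assoc, ← mul_assoc]
  linear_combination ((1:ℂ)/2) * h1 - ((1:ℂ)/2) * h2 + ((1:ℂ)/2) * h3 - ((1:ℂ)/2) * h4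

lemma comm2_eq (μ ν : Fin 5) : comm2 Γ μ ν = Γ μ * Γ ν - eta μ ν • (1:M4) := by
  have h : Γ ν * Γ μ = (2 * eta μ ν) • (1:M4) - Γ μ * Γ ν := by
    linear_combination (norm := abel) hC μ ν
  rw [comm2, h]
  module

lemma trC1 (μ ν : Fin 5) : trace (comm2 Γ μ ν) = 0 := by
  rw [comm2_eq hC, trace_sub, trace_smul, tr2 hC, trace_one]
  simp [smul_eq_mul]; ring

lemma trC2 (ρ μ ν : Fin 5) : trace (Γ ρ * comm2 Γ μ ν) = 0 := by
  rw [comm2_eq hC, mul_sub, mul_smul_comm, mul_one, trace_sub, trace_smul, ← mul_assoc,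
    tr3 hC, tr1 hC, smul_zero, sub_zero]

lemma trC2' (μ ν ρ : Fin 5) : trace (comm2 Γ μ ν * Γ ρ) = 0 := by
  rw [trace_mul_comm]; exact trC2 hC ρ μ ν

lemma trCC (μ ν ρ σ : Fin 5) : trace (comm2 Γ μ ν * comm2 Γ ρ σ)
    = 4 * (eta μ σ * eta ν ρ - eta μ ρ * eta ν σ) := by
  rw [comm2_eq hC, comm2_eq hC]
  have expand : (Γ μ * Γ ν - eta μ ν • (1:M4)) * (Γ ρ * Γ σ - eta ρ σ • (1:M4))
      = Γ μ * Γ ν * Γ ρ * Γ σ - eta ρ σ • (Γ μ * Γ ν) - eta μ ν • (Γ ρ * Γ σ)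
        + (eta μ ν * eta ρ σ) • (1:M4) := by
    simp only [sub_mul, mul_sub, smul_mul_assoc, mul_smul_comm, one_mul, mul_one, smul_smul,
      mul_assoc]
    module
  rw [expand, trace_add, trace_sub, trace_sub, trace_smul, trace_smul, trace_smul,
    tr4 hC, tr2 hC, tr2 hC, trace_one]
  simp only [smul_eq_mul, Fintype.card_fin, Nat.cast_ofNat]
  ring

end

def basis16 (Γ : Fin 5 → Matrix (Fin 4) (Fin 4) ℂ) : Fin 16 → M4 :=
  ![1, Γ 0, Γ 1, Γ 2, Γ 3, Γ 4,
    comm2 Γ 0 1, comm2 Γ 0 2, comm2 Γ 0 3, comm2 Γ 0 4, comm2 Γ 1 2,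
    comm2 Γ 1 3, comm2 Γ 1 4, comm2 Γ 2 3, comm2 Γ 2 4, comm2 Γ 3 4]

section
variable (hC : ∀ μ ν, Γ μ * Γ ν + Γ ν * Γ μ = (2 * eta μ ν) • (1 : M4))
include hC

set_option maxHeartbeats 1000000 in
lemma indep16 : LinearIndependent ℂ (basis16 Γ) := by
  rw [Fintype.linearIndependent_iff]
  intro g hg
  simp only [basis16, Fin.sum_univ_succ, Fin.sum_univ_zero, Matrix.cons_val_zero,
    Matrix.cons_val_succ, add_zero] at hg
  have tr_of : ∀ (d : M4), trace (d * (0:M4)) = 0 := by intro d; rw [mul_zero, trace_zero]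
  have key : ∀ (d : M4), trace (d * 1) = 0 → True := fun _ _ => trivial
  have t0 := congrArg (fun X => trace ((1:M4) * X)) hg
  have t1 := congrArg (fun X => trace (Γ 0 * X)) hg
  have t2 := congrArg (fun X => trace (Γ 1 * X)) hg
  have t3 := congrArg (fun X => trace (Γ 2 * X)) hg
  have t4 := congrArg (fun X => trace (Γ 3 * X)) hg
  have t5 := congrArg (fun X => trace (Γ 4 * X)) hg
  have t6 := congrArg (fun X => trace (comm2 Γ 0 1 * X)) hg
  have t7 := congrArg (fun X => trace (comm2 Γ 0 2 * X)) hg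
  have t8 := congrArg (fun X => trace (comm2 Γ 0 3 * X)) hg
  have t9 := congrArg (fun X => trace (comm2 Γ 0 4 * X)) hg
  have t10 := congrArg (fun X => trace (comm2 Γ 1 2 * X)) hg
  have t11 := congrArg (fun X => trace (comm2 Γ 1 3 * X)) hg
  have t12 := congrArg (fun X => trace (comm2 Γ 1 4 * X)) hg
  have t13 := congrArg (fun X => trace (comm2 Γ 2 3 * X)) hg
  have t14 := congrArg (fun X => trace (comm2 Γ 2 4 * X)) hg
  have t15 := congrArg (fun X => trace (comm2 Γ 3 4 * X)) hg
  simp only [mul_add, mul_smul_comm, mul_zero, mul_one, one_mul, trace_add, trace_smul,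
    trace_zero, smul_eq_mul, trace_one, tr1 hC, tr2 hC, trC1 hC, trC2 hC, trC2' hC, trCC hC,
    Fintype.card_fin, Nat.cast_ofNat] at t0 t1 t2 t3 t4 t5 t6 t7 t8 t9 t10 t11 t12 t13 t14 t15
  simp only [eta, Fin.reduceEq, reduceIte, if_true, if_false, add_zero, zero_add, neg_zero,
    neg_neg, mul_zero, zero_mul, mul_one, one_mul, sub_zero, zero_sub, mul_neg, neg_mul]
    at t0 t1 t2 t3 t4 t5 t6 t7 t8 t9 t10 t11 t12 t13 t14 t15
  simp only [show Fin.succ (0:Fin 15) = (1:Fin 16) by decide, show Fin.succ (1:Fin 15) = (2:Fin 16) by decide, show Fin.succ (2:Fin 15) = (3:Fin 16) by decide, show Fin.succ (3:Fin 15) = (4:Fin 16) by decide, show Fin.succ (4:Fin 15) = (5:Fin 16) by decide, show Fin.succ (5:Fin 15) = (6:Fin 16) by decide, show Fin.succ (6:Fin 15) = (7:Fin 16) by decide, show Fin.succ (7:Fin 15) = (8:Fin 16) by decide, show Fin.succ (8:Fin 15) = (9:Fin 16) by decide, show Fin.succ (9:Fin 15) = (10:Fin 16) by decide, show Fin.succ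 (10:Fin 15) = (11:Fin 16) by decide, show Fin.succ (11:Fin 15) = (12:Fin 16) by decide, show Fin.succ (12:Fin 15) = (13:Fin 16) by decide, show Fin.succ (13:Fin 15) = (14:Fin 16) by decide, show Fin.succ (14:Fin 15) = (15:Fin 16) by decide]
    at t0 t1 t2 t3 t4 t5 t6 t7 t8 t9 t10 t11 t12 t13 t14 t15
  intro i
  norm_num [neg_eq_zero, mul_eq_zero]
    at t0 t1 t2 t3 t4 t5 t6 t7 t8 t9 t10 t11 t12 t13 t14 t15
  fin_cases i <;> assumption

lemma span16 : Submodule.span ℂ (Set.range (basis16 Γ)) = ⊤ := by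
  refine (indep16 hC).span_eq_top_of_card_eq_finrank ?_
  rw [Module.finrank_matrix]
  simp

end

/-- The trace-projection map onto the 16-element Clifford basis. -/
def Tmap (Γ : Fin 5 → Matrix (Fin 4) (Fin 4) ℂ) : M4 →ₗ[ℂ] M4 :=
  (1/4 : ℂ) • ((Matrix.traceLinearMap (Fin 4) ℂ ℂ).smulRight (1:M4))
  + (1/4 : ℂ) • (∑ μ, (eta μ μ) •
      (((Matrix.traceLinearMap (Fin 4) ℂ ℂ).comp (LinearMap.mulLeft ℂ (Γ μ))).smulRight (Γ μ)))
  - (1/8 : ℂ) • (∑ μ, ∑ ν, (eta μ μ * eta ν ν) •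
      (((Matrix.traceLinearMap (Fin 4) ℂ ℂ).comp
        (LinearMap.mulLeft ℂ (comm2 Γ μ ν))).smulRight (comm2 Γ μ ν)))

lemma Tmap_apply (Γ : Fin 5 → Matrix (Fin 4) (Fin 4) ℂ) (M : M4) :
    Tmap Γ M = (1/4 * trace M) • (1:M4)
      + (1/4 : ℂ) • (∑ μ, (eta μ μ * trace (Γ μ * M)) • Γ μ)
      - (1/8 : ℂ) • (∑ μ, ∑ ν,
          ((eta μ μ * eta ν ν) * trace (comm2 Γ μ ν * M)) • comm2 Γ μ ν) := by
  have e1 : (∑ μ, eta μ μ • (trace (Γ μ * M) • Γ μ))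
      = ∑ μ, (eta μ μ * trace (Γ μ * M)) • Γ μ :=
    Finset.sum_congr rfl (fun μ _ => smul_smul _ _ _)
  have e2 : (∑ μ, ∑ ν, (eta μ μ * eta ν ν) • (trace (comm2 Γ μ ν * M) • comm2 Γ μ ν))
      = ∑ μ, ∑ ν, ((eta μ μ * eta ν ν) * trace (comm2 Γ μ ν * M)) • comm2 Γ μ ν :=
    Finset.sum_congr rfl (fun μ _ => Finset.sum_congr rfl (fun ν _ => smul_smul _ _ _))
  simp only [Tmap, LinearMap.sub_apply, LinearMap.add_apply, LinearMap.smul_apply,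
    LinearMap.sum_apply, LinearMap.smulRight_apply, LinearMap.comp_apply,
    LinearMap.mulLeft_apply, Matrix.traceLinearMap_apply]
  simp only [e1, e2, smul_smul]

section
variable (hC : ∀ μ ν, Γ μ * Γ ν + Γ ν * Γ μ = (2 * eta μ ν) • (1 : M4))
include hC

lemma comm2_antisymm (μ ν : Fin 5) : comm2 Γ ν μ = -(comm2 Γ μ ν) := by
  simp only [comm2, ← smul_neg, neg_sub]

lemma Tmap_one : Tmap Γ (1:M4) = 1 := by
  rw [Tmap_apply]
  simp only [mul_one, trace_one, Fintype.card_fin, Nat.cast_ofNat, tr1 hC, trC1 hC,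
    mul_zero, zero_smul, Finset.sum_const_zero, smul_zero, add_zero, sub_zero]
  norm_num

lemma Tmap_gamma (ρ : Fin 5) : Tmap Γ (Γ ρ) = Γ ρ := by
  rw [Tmap_apply]
  have h2 : ∀ μ ∈ Finset.univ, (eta μ μ * trace (Γ μ * Γ ρ)) • Γ μ
      = if μ = ρ then (4:ℂ) • Γ ρ else (0:M4) := by
    intro μ _
    rcases eq_or_ne μ ρ with h | h
    · rw [h, if_pos rfl, tr2 hC,
        show eta ρ ρ * (4 * eta ρ ρ) = 4 * (eta ρ ρ * eta ρ ρ) from by ring, eta_sq, mul_one]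
    · rw [if_neg h, tr2 hC, eta_off h, mul_zero, mul_zero, zero_smul]
  rw [Finset.sum_congr rfl h2, Finset.sum_ite_eq' Finset.univ ρ (fun _ => (4:ℂ) • Γ ρ)]
  simp only [Finset.mem_univ, if_pos, tr1 hC, mul_zero, zero_smul, trC2' hC]
  simp only [Finset.sum_const_zero, smul_zero, sub_zero, smul_smul]
  norm_num

lemma Tmap_comm2 (ρ σ : Fin 5) : Tmap Γ (comm2 Γ ρ σ) = comm2 Γ ρ σ := by
  rw [Tmap_apply]
  have h3 : ∀ μ ∈ (Finset.univ : Finset (Fin 5)), ∀ ν ∈ (Finset.univ : Finset (Fin 5)),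
      ((eta μ μ * eta ν ν) * trace (comm2 Γ μ ν * comm2 Γ ρ σ)) • comm2 Γ μ ν
      = (if ν = ρ then (if μ = σ then (4:ℂ) • comm2 Γ μ ν else 0) else 0)
        - (if ν = σ then (if μ = ρ then (4:ℂ) • comm2 Γ μ ν else 0) else 0) := by
    intro μ _ ν _
    have hs : (eta μ μ * eta ν ν) * trace (comm2 Γ μ ν * comm2 Γ ρ σ)
        = 4 * ((eta μ μ * eta μ σ) * (eta ν ν * eta ν ρ))
          - 4 * ((eta μ μ * eta μ ρ) * (eta ν ν * eta ν σ)) := by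
      rw [trCC hC]; ring
    rw [hs, eta_delta, eta_delta, eta_delta, eta_delta, sub_smul]
    congr 1
    · rcases eq_or_ne ν ρ with h' | h'
      · rcases eq_or_ne μ σ with h | h <;> simp [h, h']
      · simp [h']
    · rcases eq_or_ne ν σ with h' | h'
      · rcases eq_or_ne μ ρ with h | h <;> simp [h, h']
      · simp [h']
  rw [Finset.sum_congr rfl (fun μ hμ => Finset.sum_congr rfl (h3 μ hμ))]
  rw [Finset.sum_congr rfl (fun μ _ => Finset.sum_sub_distrib _ _), Finset.sum_sub_distrib]
  rw [Finset.sum_congr rfl (fun μ _ =>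
        Finset.sum_ite_eq' Finset.univ ρ (fun ν => if μ = σ then (4:ℂ) • comm2 Γ μ ν else 0)),
      Finset.sum_congr rfl (fun μ _ =>
        Finset.sum_ite_eq' Finset.univ σ (fun ν => if μ = ρ then (4:ℂ) • comm2 Γ μ ν else 0))]
  simp only [Finset.mem_univ, if_true]
  rw [Finset.sum_ite_eq' Finset.univ σ (fun μ => (4:ℂ) • comm2 Γ μ ρ),
      Finset.sum_ite_eq' Finset.univ ρ (fun μ => (4:ℂ) • comm2 Γ μ σ)]
  simp only [Finset.mem_univ, if_true, trC1 hC, trC2 hC, mul_zero, zero_smul,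
    Finset.sum_const_zero, smul_zero, add_zero]
  rw [show comm2 Γ σ ρ = -(comm2 Γ ρ σ) from comm2_antisymm hC ρ σ]
  module

set_option maxHeartbeats 2000000 in
lemma master (M : M4) :
    M = (1/4 * trace M) • (1:M4)
      + (1/4 : ℂ) • (∑ μ, (eta μ μ * trace (Γ μ * M)) • Γ μ)
      - (1/8 : ℂ) • (∑ μ, ∑ ν,
          ((eta μ μ * eta ν ν) * trace (comm2 Γ μ ν * M)) • comm2 Γ μ ν) := by
  have hcases : ∀ i : Fin 16, basis16 Γ i = 1 ∨ (∃ ρ, basis16 Γ i = Γ ρ) ∨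
      ∃ ρ σ, basis16 Γ i = comm2 Γ ρ σ := by
    intro i
    fin_cases i
    · exact Or.inl rfl
    · exact Or.inr (Or.inl ⟨0, rfl⟩)
    · exact Or.inr (Or.inl ⟨1, rfl⟩)
    · exact Or.inr (Or.inl ⟨2, rfl⟩)
    · exact Or.inr (Or.inl ⟨3, rfl⟩)
    · exact Or.inr (Or.inl ⟨4, rfl⟩)
    · exact Or.inr (Or.inr ⟨0, 1, rfl⟩)
    · exact Or.inr (Or.inr ⟨0, 2, rfl⟩)
    · exact Or.inr (Or.inr ⟨0, 3, rfl⟩)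
    · exact Or.inr (Or.inr ⟨0, 4, rfl⟩)
    · exact Or.inr (Or.inr ⟨1, 2, rfl⟩)
    · exact Or.inr (Or.inr ⟨1, 3, rfl⟩)
    · exact Or.inr (Or.inr ⟨1, 4, rfl⟩)
    · exact Or.inr (Or.inr ⟨2, 3, rfl⟩)
    · exact Or.inr (Or.inr ⟨2, 4, rfl⟩)
    · exact Or.inr (Or.inr ⟨3, 4, rfl⟩)
  have hext : (LinearMap.id : M4 →ₗ[ℂ] M4) = Tmap Γ := by
    apply LinearMap.ext_on_range (span16 hC)
    intro i
    rw [LinearMap.id_apply]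
    rcases hcases i with h | ⟨ρ, h⟩ | ⟨ρ, σ, h⟩ <;> rw [h]
    · exact (Tmap_one hC).symm
    · exact (Tmap_gamma hC ρ).symm
    · exact (Tmap_comm2 hC ρ σ).symm

  have := DFunLike.congr_fun hext M
  rw [LinearMap.id_apply] at this
  rw [← Tmap_apply]
  exact this

end

lemma trace_vmv (a w : Fin 4 → ℂ) : trace (vecMulVec a w) = a ⬝ᵥ w := by
  simp [Matrix.trace, Matrix.diag, Matrix.vecMulVec_apply, dotProduct]

lemma mul_vmv (B : M4) (a w : Fin 4 → ℂ) : B * vecMulVec a w = vecMulVec (B *ᵥ a) w := by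
  ext i j
  simp [Matrix.mul_apply, Matrix.vecMulVec_apply, Matrix.mulVec, dotProduct,
    Finset.sum_mul, mul_assoc]

section
variable {Cm : M4} (hCt : Cmᵀ = -Cm)
include hCt

lemma key1 (s₁ s₂ : Fin 4 → ℂ) : trace (vecMulVec s₁ (s₂ ᵥ* Cm)) = - bil Cm s₁ s₂ := by
  rw [trace_vmv, show s₂ ᵥ* Cm = Cmᵀ *ᵥ s₂ from (Matrix.mulVec_transpose Cm s₂).symm,
    hCt, Matrix.neg_mulVec, dotProduct_neg, bil]

lemma keyK (K : M4) (c : ℂ) (hK : Cm * K = c • (Kᵀ * Cm)) (s₁ s₂ : Fin 4 → ℂ) :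
    trace (K * vecMulVec s₁ (s₂ ᵥ* Cm)) = (-c) * bilM Cm K s₁ s₂ := by
  rw [mul_vmv, trace_vmv,
    show s₂ ᵥ* Cm = Cmᵀ *ᵥ s₂ from (Matrix.mulVec_transpose Cm s₂).symm,
    Matrix.dotProduct_mulVec, Matrix.vecMul_transpose, Matrix.mulVec_mulVec, hK,
    Matrix.smul_mulVec, smul_dotProduct, ← Matrix.mulVec_mulVec,
    Matrix.mulVec_transpose, ← Matrix.dotProduct_mulVec]
  have h2 : Cm *ᵥ s₁ = -(s₁ ᵥ* Cm) := by
    have h := Matrix.mulVec_transpose Cm s₁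
    rw [hCt, Matrix.neg_mulVec] at h
    exact neg_eq_iff_eq_neg.mp h
  rw [h2, neg_dotProduct, bilM,
    show s₁ ⬝ᵥ Cm *ᵥ K *ᵥ s₂ = (s₁ ᵥ* Cm) ⬝ᵥ (K *ᵥ s₂) from
      Matrix.dotProduct_mulVec s₁ Cm (K *ᵥ s₂), smul_eq_mul]
  ring

end

lemma hKc {Γ : Fin 5 → Matrix (Fin 4) (Fin 4) ℂ} {Cm : M4}
    (hCΓ : ∀ μ, Cm * Γ μ = (Γ μ)ᵀ * Cm) (μ ν : Fin 5) :
    Cm * comm2 Γ μ ν = (-1:ℂ) • ((comm2 Γ μ ν)ᵀ * Cm) := by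
  have h1 : Cm * (Γ μ * Γ ν) = (Γ μ)ᵀ * (Γ ν)ᵀ * Cm := by
    rw [← mul_assoc, hCΓ μ, mul_assoc, hCΓ ν, ← mul_assoc]
  have h2 : Cm * (Γ ν * Γ μ) = (Γ ν)ᵀ * (Γ μ)ᵀ * Cm := by
    rw [← mul_assoc, hCΓ ν, mul_assoc, hCΓ μ, ← mul_assoc]
  simp only [comm2, mul_smul_comm, smul_mul_assoc, Matrix.transpose_smul, Matrix.transpose_sub,
    Matrix.transpose_mul, mul_sub, sub_mul, h1, h2]
  module

end FierzAux

/-- The Fierz identity: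
    s₁ (s₂ᵀ C) = −(1/4)(s̄₁s₂)·1 − (1/4)Σ_μ (s̄₁Γ^μs₂)Γ_μ − (1/8)Σ_{μν} (s̄₁Γ^{μν}s₂)Γ_{μν}. -/
theorem fierz_identity (Γ : Fin 5 → Matrix (Fin 4) (Fin 4) ℂ)
    (Cm : Matrix (Fin 4) (Fin 4) ℂ)
    (hC : ∀ μ ν, Γ μ * Γ ν + Γ ν * Γ μ = (2 * eta μ ν) • (1 : Matrix (Fin 4) (Fin 4) ℂ))
    (hvol : Γ 0 * Γ 1 * Γ 2 * Γ 3 * Γ 4 = 1)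
    (hCt : Cmᵀ = -Cm)
    (hCΓ : ∀ μ, Cm * Γ μ = (Γ μ)ᵀ * Cm)
    (s₁ s₂ : Fin 4 → ℂ) :
    vecMulVec s₁ (s₂ ᵥ* Cm)
      = (-(1/4 : ℂ) * bil Cm s₁ s₂) • (1 : Matrix (Fin 4) (Fin 4) ℂ)
        - (1/4 : ℂ) • (∑ μ, (eta μ μ * bilM Cm (Γ μ) s₁ s₂) • Γ μ)
        - (1/8 : ℂ) • (∑ μ, ∑ ν,
            ((eta μ μ * eta ν ν) * bilM Cm (comm2 Γ μ ν) s₁ s₂) • comm2 Γ μ ν) := by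
  have hM := FierzAux.master hC (vecMulVec s₁ (s₂ ᵥ* Cm))
  rw [hM, FierzAux.key1 hCt s₁ s₂]
  have e2 : ∀ μ ∈ (Finset.univ : Finset (Fin 5)),
      (eta μ μ * trace (Γ μ * vecMulVec s₁ (s₂ ᵥ* Cm))) • Γ μ
      = -((eta μ μ * bilM Cm (Γ μ) s₁ s₂) • Γ μ) := by
    intro μ _
    rw [FierzAux.keyK hCt (Γ μ) 1 (by rw [one_smul]; exact hCΓ μ) s₁ s₂, ← neg_smul]
    congr 1; ring
  have e3 : ∀ μ ∈ (Finset.univ : Finset (Fin 5)), ∀ ν ∈ (Finset.univ : Finset (Fin 5)),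
      ((eta μ μ * eta ν ν) * trace (comm2 Γ μ ν * vecMulVec s₁ (s₂ ᵥ* Cm))) • comm2 Γ μ ν
      = ((eta μ μ * eta ν ν) * bilM Cm (comm2 Γ μ ν) s₁ s₂) • comm2 Γ μ ν := by
    intro μ _ ν _
    rw [FierzAux.keyK hCt (comm2 Γ μ ν) (-1) (FierzAux.hKc hCΓ μ ν) s₁ s₂]
    congr 1; ring
  rw [Finset.sum_congr rfl e2, Finset.sum_congr rfl (fun μ hμ => Finset.sum_congr rfl (e3 μ hμ))]
  rw [Finset.sum_neg_distrib]
  module
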